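/- Let S = span( { e_m⊗f_0 : 0 ≤ m ≤ λ0 } ∪ { e_{λ0}⊗f_m : 0 ≤ m ≤ λ1 } ) ⊆ V ⊗ U. Then S is invariant under N⊗id and id⊗M', and every nonzero subspace of S that is invariant under both N⊗id and id⊗M' contains the vector e_{λ0}⊗f_0; that is, S is cocyclic with cocyclic vector e_{λ0}⊗f_0 for the action of the operators N⊗id and id⊗M'. -/

import Mathlib

/-- The model of `V ⊗ U` in coordinates, where `V = ℂ^{λ0+1}` with basis `e_0,…,e_{λ0}`
and `U = ℂ^{λ1+1}` with basis `f_0,…,f_{λ1}`: a vector is the function assigning to each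
basis index `(i,j)` (for `e_i ⊗ f_j`) its coefficient. -/
abbrev Tensor (l0 l1 : ℕ) : Type := Fin (l0 + 1) × Fin (l1 + 1) → ℂ

/-- The operator `N⊗id`, where `N` is the lowering shift `e_i ↦ e_{i+1}` (`e_{λ0} ↦ 0`):
the coefficient of `e_i ⊗ f_j` in `(N⊗id) v` is the coefficient of `e_{i-1} ⊗ f_j` in
`v` (zero for `i = 0`). -/
def T1 (l0 l1 : ℕ) (v : Tensor l0 l1) : Tensor l0 l1 :=
  fun p => if h : 0 < p.1.val then v (⟨p.1.val - 1, by have := p.1.isLt; omega⟩, p.2) else 0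

/-- The operator `id⊗M'`, where `M'` is the raising shift `f_i ↦ f_{i-1}` (`f_0 ↦ 0`):
the coefficient of `e_i ⊗ f_j` in `(id⊗M') v` is the coefficient of `e_i ⊗ f_{j+1}` in
`v` (zero for `j = λ1`). -/
def T2 (l0 l1 : ℕ) (v : Tensor l0 l1) : Tensor l0 l1 :=
  fun p => if h : p.2.val < l1 then v (p.1, ⟨p.2.val + 1, by omega⟩) else 0

/-- `S = span( { e_m ⊗ f_0 : 0 ≤ m ≤ λ0 } ∪ { e_{λ0} ⊗ f_m : 0 ≤ m ≤ λ1 } )`. -/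
noncomputable def Ssub (l0 l1 : ℕ) : Submodule ℂ (Tensor l0 l1) :=
  Submodule.span ℂ
    ((Set.range fun m : Fin (l0 + 1) =>
        (Pi.single (m, (0 : Fin (l1 + 1))) 1 : Tensor l0 l1)) ∪
      (Set.range fun m : Fin (l1 + 1) =>
        (Pi.single (Fin.last l0, m) 1 : Tensor l0 l1)))

/-!
Both operators are nilpotent and they commute, so a nonzero subspace `W` invariant under both
contains a nonzero vector killed by both: apply to any nonzero vector of `W` the largest power
of `N⊗id` that does not kill it, and then the largest such power of `id⊗M'`. On all of `V ⊗ U`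
the common kernel of the two shifts is the line through `e_{λ0} ⊗ f_0`. Invariance of `S` is
read off from its description as the vectors supported on the hook `{j = 0} ∪ {i = λ0}`.
-/

namespace Module.End

variable {R M : Type*} [Semiring R] [AddCommMonoid M] [Module R M]

theorem exists_pow_apply_ne_zero_and_apply_eq_zero {f : Module.End R M} (hf : IsNilpotent f)
    {w : M} (hw : w ≠ 0) : ∃ k, (f ^ k) w ≠ 0 ∧ f ((f ^ k) w) = 0 := by
  classical
  obtain ⟨n, hn⟩ := hf
  have hkill : ∃ k, (f ^ (k + 1)) w = 0 :=
    ⟨n, by rw [pow_succ', mul_apply, hn, LinearMap.zero_apply, map_zero]⟩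
  refine ⟨Nat.find hkill, ?_, by rw [← mul_apply, ← pow_succ']; exact Nat.find_spec hkill⟩
  rcases h : Nat.find hkill with _ | k
  · simpa using hw
  · exact Nat.find_min hkill (h ▸ Nat.lt_succ_self k)

theorem exists_ne_zero_mem_apply_eq_zero_of_commute {f g : Module.End R M} (hfg : Commute f g)
    (hf : IsNilpotent f) (hg : IsNilpotent g) {W : Submodule R M} (hW : W ≠ ⊥)
    (hfW : ∀ x ∈ W, f x ∈ W) (hgW : ∀ x ∈ W, g x ∈ W) :
    ∃ w ∈ W, w ≠ 0 ∧ f w = 0 ∧ g w = 0 := by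
  obtain ⟨w, hwW, hw⟩ := W.exists_mem_ne_zero_of_ne_bot hW
  obtain ⟨k, hk, hfk⟩ := exists_pow_apply_ne_zero_and_apply_eq_zero hf hw
  obtain ⟨m, hm, hgm⟩ := exists_pow_apply_ne_zero_and_apply_eq_zero hg hk
  refine ⟨(g ^ m) ((f ^ k) w), pow_apply_mem_of_forall_mem m hgW _
    (pow_apply_mem_of_forall_mem k hfW w hwW), hm, ?_, hgm⟩
  rw [← mul_apply, (hfg.pow_right m).eq, mul_apply, hfk, map_zero]

end Module.End

section

variable (l0 l1 : ℕ)

def T1ₗ : Module.End ℂ (Tensor l0 l1) where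
  toFun := T1 l0 l1
  map_add' v w := by funext p; simp only [T1, Pi.add_apply]; split_ifs <;> simp
  map_smul' c v := by funext p; simp only [T1, Pi.smul_apply, RingHom.id_apply]; split_ifs <;> simp

def T2ₗ : Module.End ℂ (Tensor l0 l1) where
  toFun := T2 l0 l1
  map_add' v w := by funext p; simp only [T2, Pi.add_apply]; split_ifs <;> simp
  map_smul' c v := by funext p; simp only [T2, Pi.smul_apply, RingHom.id_apply]; split_ifs <;> simp

theorem commute_T1ₗ_T2ₗ : Commute (T1ₗ l0 l1) (T2ₗ l0 l1) := by
  refine LinearMap.ext fun v => funext fun p => ?_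
  show T1 l0 l1 (T2 l0 l1 v) p = T2 l0 l1 (T1 l0 l1 v) p
  simp only [T1, T2]
  split_ifs <;> rfl

theorem iterate_T1_apply_of_lt {n : ℕ} (v : Tensor l0 l1) (p : Fin (l0 + 1) × Fin (l1 + 1))
    (hp : p.1.val < n) : (T1 l0 l1)^[n] v p = 0 := by
  induction n generalizing p with
  | zero => omega
  | succ n ih =>
    rw [Function.iterate_succ_apply', T1]
    split_ifs with h
    · exact ih _ (by simp only; omega)
    · rfl

theorem iterate_T2_apply_of_lt {n : ℕ} (v : Tensor l0 l1) (p : Fin (l0 + 1) × Fin (l1 + 1))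
    (hp : l1 < p.2.val + n) : (T2 l0 l1)^[n] v p = 0 := by
  induction n generalizing p with
  | zero => omega
  | succ n ih =>
    rw [Function.iterate_succ_apply', T2]
    split_ifs with h
    · exact ih _ (by simp only; omega)
    · rfl

theorem isNilpotent_T1ₗ : IsNilpotent (T1ₗ l0 l1) :=
  ⟨l0 + 1, LinearMap.ext fun v => funext fun p => by
    rw [Module.End.pow_apply]
    exact iterate_T1_apply_of_lt l0 l1 v p p.1.isLt⟩

theorem isNilpotent_T2ₗ : IsNilpotent (T2ₗ l0 l1) :=
  ⟨l1 + 1, LinearMap.ext fun v => funext fun p => by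
    rw [Module.End.pow_apply]
    exact iterate_T2_apply_of_lt l0 l1 v p (by omega)⟩

end

section

variable {l0 l1 : ℕ}

theorem T1_apply_succ (v : Tensor l0 l1) (i : Fin l0) (j : Fin (l1 + 1)) :
    T1 l0 l1 v (i.succ, j) = v (i.castSucc, j) := by
  simp [T1]; rfl

theorem T2_apply_castSucc (v : Tensor l0 l1) (i : Fin (l0 + 1)) (j : Fin l1) :
    T2 l0 l1 v (i, j.castSucc) = v (i, j.succ) := by
  simp [T2]; rfl

theorem eq_smul_single_of_T1_eq_zero_of_T2_eq_zero {v : Tensor l0 l1} (h1 : T1 l0 l1 v = 0)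
    (h2 : T2 l0 l1 v = 0) : v = v (Fin.last l0, 0) • Pi.single (Fin.last l0, 0) 1 := by
  funext ⟨i, j⟩
  induction i using Fin.lastCases with
  | last =>
    induction j using Fin.cases with
    | zero => simp
    | succ j => rw [← T2_apply_castSucc v, h2]; simp
  | cast i => rw [← T1_apply_succ v, h1]; simp [Fin.castSucc_ne_last]

theorem mem_Ssub_iff {v : Tensor l0 l1} :
    v ∈ Ssub l0 l1 ↔ ∀ p, v p ≠ 0 → p.2 = 0 ∨ p.1 = Fin.last l0 := by
  have hspan : Ssub l0 l1 =
      Submodule.span ℂ (Pi.basisFun ℂ _ '' {p | p.2 = 0 ∨ p.1 = Fin.last l0}) := by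
    rw [Ssub]
    congr 1
    ext x
    simp only [Set.mem_union, Set.mem_range, Set.mem_image, Set.mem_ofPred_eq, Prod.exists,
      Pi.basisFun_apply]
    constructor
    · rintro (⟨m, rfl⟩ | ⟨m, rfl⟩)
      exacts [⟨m, 0, Or.inl rfl, rfl⟩, ⟨Fin.last l0, m, Or.inr rfl, rfl⟩]
    · rintro ⟨i, j, (rfl | rfl), rfl⟩
      exacts [Or.inl ⟨i, rfl⟩, Or.inr ⟨j, rfl⟩]
  rw [hspan, Module.Basis.mem_span_image]
  simp [Set.subset_def]

theorem T1_mem_Ssub {v : Tensor l0 l1} (hv : v ∈ Ssub l0 l1) : T1 l0 l1 v ∈ Ssub l0 l1 := by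
  rw [mem_Ssub_iff] at hv ⊢
  rintro ⟨i, j⟩ hij
  induction i using Fin.cases with
  | zero => exact absurd (by simp [T1]) hij
  | succ i =>
    rw [T1_apply_succ] at hij
    exact (hv _ hij).imp id fun h => absurd h (Fin.castSucc_ne_last i)

theorem T2_mem_Ssub {v : Tensor l0 l1} (hv : v ∈ Ssub l0 l1) : T2 l0 l1 v ∈ Ssub l0 l1 := by
  rw [mem_Ssub_iff] at hv ⊢
  rintro ⟨i, j⟩ hij
  induction j using Fin.lastCases with
  | last => exact absurd (by simp [T2]) hij
  | cast j =>
    rw [T2_apply_castSucc] at hij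
    exact (hv _ hij).imp (fun h => absurd h (Fin.succ_ne_zero j)) id

end

/-- `S` is invariant under `N⊗id` and `id⊗M'`, and every nonzero subspace
of `S` invariant under both operators contains `e_{λ0} ⊗ f_0`; that is, `S` is cocyclic
with cocyclic vector `e_{λ0} ⊗ f_0` for the action of these operators. -/
theorem statement15 (l0 l1 : ℕ) :
    (∀ x ∈ Ssub l0 l1, T1 l0 l1 x ∈ Ssub l0 l1) ∧
    (∀ x ∈ Ssub l0 l1, T2 l0 l1 x ∈ Ssub l0 l1) ∧
    (∀ W : Submodule ℂ (Tensor l0 l1), W ≤ Ssub l0 l1 → W ≠ ⊥ →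
      (∀ x ∈ W, T1 l0 l1 x ∈ W) → (∀ x ∈ W, T2 l0 l1 x ∈ W) →
      (Pi.single (Fin.last l0, (0 : Fin (l1 + 1))) 1 : Tensor l0 l1) ∈ W) := by
  refine ⟨fun _ => T1_mem_Ssub, fun _ => T2_mem_Ssub, fun W _ hW hW1 hW2 => ?_⟩
  obtain ⟨w, hwW, hw0, h1, h2⟩ := Module.End.exists_ne_zero_mem_apply_eq_zero_of_commute
    (commute_T1ₗ_T2ₗ l0 l1) (isNilpotent_T1ₗ l0 l1) (isNilpotent_T2ₗ l0 l1) hW hW1 hW2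
  have hw := eq_smul_single_of_T1_eq_zero_of_T2_eq_zero h1 h2
  have hc : w (Fin.last l0, 0) ≠ 0 := fun hc => hw0 (by rw [hw, hc, zero_smul])
  rw [hw] at hwW
  exact (W.smul_mem_iff hc).1 hwW
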